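/- arXiv:0912.2548 — 2 statements merged into one kernel-verified Lean document; each statement's English description precedes it below -/
import Mathlib

section
/- Correctness of Pgen's subset pruning: let D be a finite set of transactions and define P = {T ∈ D : T is not a proper subset of any other transaction in D and sup(T, D) < k}. Then P equals the set of maximal infrequent itemsets of D, i.e., itemsets I with 0 < sup(I, D) < k such that every proper superset of I has support 0. -/
def supF {α : Type*} [DecidableEq α] (I : Finset α) (D : Finset (Finset α)) : ℕ :=
  (D.filter (fun T => I ⊆ T)).card

section

variable {α : Type*} [DecidableEq α] {I : Finset α} {D : Finset (Finset α)}

lemma supF_pos_iff : 0 < supF I D ↔ ∃ T ∈ D, I ⊆ T := by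
  simp only [supF, Finset.card_pos, Finset.filter_nonempty_iff]

lemma supF_pos_of_mem (h : I ∈ D) : 0 < supF I D :=
  supF_pos_iff.mpr ⟨I, h, subset_rfl⟩

lemma forall_ssuperset_supF_eq_zero_iff :
    (∀ J : Finset α, I ⊂ J → supF J D = 0) ↔ ∀ T ∈ D, ¬ I ⊂ T := by
  constructor
  · intro hzero T hT hIT
    exact (supF_pos_of_mem hT).ne' (hzero T hIT)
  · intro hmax J hIJ
    by_contra hJ
    obtain ⟨T, hT, hJT⟩ := supF_pos_iff.mp (Nat.pos_of_ne_zero hJ)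
    exact hmax T hT (hIJ.trans_subset hJT)

lemma mem_of_supF_pos_of_forall_not_ssubset (hpos : 0 < supF I D)
    (hmax : ∀ T ∈ D, ¬ I ⊂ T) : I ∈ D := by
  obtain ⟨T, hT, hIT⟩ := supF_pos_iff.mp hpos
  obtain rfl | hssub := hIT.eq_or_ssubset
  · exact hT
  · exact absurd hssub (hmax T hT)

end

theorem pgen_correct_general {α : Type*} [DecidableEq α]
    (D : Finset (Finset α)) (k : ℕ) (I : Finset α) :
    (I ∈ D.filter (fun T => (∀ T' ∈ D, ¬ T ⊂ T') ∧ supF T D < k))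
      ↔ (0 < supF I D ∧ supF I D < k ∧ ∀ J : Finset α, I ⊂ J → supF J D = 0) := by
  rw [Finset.mem_filter, forall_ssuperset_supF_eq_zero_iff]
  constructor
  · rintro ⟨hI, hmax, hsup⟩
    exact ⟨supF_pos_of_mem hI, hsup, hmax⟩
  · rintro ⟨hpos, hsup, hmax⟩
    exact ⟨mem_of_supF_pos_of_forall_not_ssubset hpos hmax, hmax, hsup⟩

/-- Correctness of Pgen's pruning: the transactions of `D` that are not
    proper subsets of other transactions and have support `< k` are exactly
    the maximal infrequent itemsets of `D`. -/
theorem pgen_correct {α : Type*} [DecidableEq α]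
    (D : Finset (Finset α)) (k : ℕ) (hk : 0 < k) (I : Finset α) :
    (I ∈ D.filter (fun T => (∀ T' ∈ D, ¬ T ⊂ T') ∧ supF T D < k))
      ↔ (0 < supF I D ∧ supF I D < k ∧ ∀ J : Finset α, I ⊂ J → supF J D = 0) :=
  pgen_correct_general D k I
end

section
/- If a privacy constraint set P is satisfied in D̃ with parameter k (every p ∈ P satisfied per Definition of privacy constraint satisfiability) and every itemset I an attacker may use is a subset of some p ∈ P, then for every such I the itemset ⋃_{i∈I} Φ(i) is either supported by at least k transactions of D̃ or by none; hence no attacker using I can isolate fewer than k (but more than 0) transactions. -/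
def sup {α : Type*} [DecidableEq α] (I : Finset α) (D : Multiset (Finset α)) : ℕ :=
  (D.filter (fun T => I ⊆ T)).card

def satisfied {α : Type*} [DecidableEq α] (k : ℕ) (Φ : α → Finset α)
    (D : Multiset (Finset α)) (p : Finset α) : Prop :=
  k ≤ sup (p.biUnion Φ) D ∨
    (sup (p.biUnion Φ) D = 0 ∧
      ∀ J ⊂ p.biUnion Φ, k ≤ sup J D ∨ sup J D = 0)

section

variable {α : Type*} [DecidableEq α] {k : ℕ} {Φ : α → Finset α} {D : Multiset (Finset α)}

theorem sup_anti {I J : Finset α} (h : I ⊆ J) : sup J D ≤ sup I D :=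
  Multiset.card_le_card <| Multiset.monotone_filter_right D fun _ hJ => h.trans hJ

theorem satisfied.le_sup_or_sup_eq_zero {p : Finset α} (hp : satisfied k Φ D p) :
    k ≤ sup (p.biUnion Φ) D ∨ sup (p.biUnion Φ) D = 0 :=
  hp.imp_right And.left

theorem satisfied.mono {p q : Finset α} (hp : satisfied k Φ D p) (hqp : q ⊆ p) :
    satisfied k Φ D q := by
  have hsub : q.biUnion Φ ⊆ p.biUnion Φ := Finset.biUnion_subset_biUnion_of_subset_left Φ hqp
  rcases hp with hk | ⟨h0, hproper⟩
  · exact Or.inl (hk.trans (sup_anti hsub))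
  rcases hsub.eq_or_ssubset with heq | hlt
  · exact Or.inr ⟨heq ▸ h0, heq ▸ hproper⟩
  rcases hproper _ hlt with hk | hq0
  · exact Or.inl hk
  · exact Or.inr ⟨hq0, fun J hJ => hproper J (hJ.trans hlt)⟩

end

theorem protected_no_isolation_general {α : Type*} [DecidableEq α]
    (k : ℕ) (Φ : α → Finset α) (D : Multiset (Finset α))
    (P : Finset (Finset α)) (hP : ∀ p ∈ P, satisfied k Φ D p)
    (I : Finset α) (hI : ∃ p ∈ P, I ⊆ p) :
    k ≤ sup (I.biUnion Φ) D ∨ sup (I.biUnion Φ) D = 0 := by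
  obtain ⟨p, hpP, hIp⟩ := hI
  exact ((hP p hpP).mono hIp).le_sup_or_sup_eq_zero

/-- If all constraints of `P` are satisfied in `D̃` and an attacker's itemset
    `I` is a subset of some `p ∈ P`, then `⋃_{i∈I} Φ(i)` is supported by at
    least `k` transactions of `D̃` or by none. -/
theorem protected_no_isolation {α : Type*} [DecidableEq α]
    (k : ℕ) (hk : 1 ≤ k) (Φ : α → Finset α) (D : Multiset (Finset α))
    (P : Finset (Finset α)) (hP : ∀ p ∈ P, satisfied k Φ D p)
    (I : Finset α) (hI : ∃ p ∈ P, I ⊆ p) :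
    k ≤ sup (I.biUnion Φ) D ∨ sup (I.biUnion Φ) D = 0 :=
  protected_no_isolation_general k Φ D P hP I hI
end
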